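/- arXiv:2512.20096 — 3 statements merged into one kernel-verified Lean document; each statement's English description precedes it below -/
import Mathlib

section
/- (Hölder inequality for discounted cumulative costs.) In the discounted-cost framework, let α ∈ (0,1), let f, g : X → ℝ be bounded with f ≥ 0 pointwise and g ≥ ε pointwise for some ε > 0, and set h = f^{1/α} g^{1−1/α} (which is bounded and nonnegative). Then the discounted cumulative costs satisfy C_f(x) ≤ C_h(x)^α · C_g(x)^{1−α} for every x ∈ X. -/
/-!
By Hölder's inequality the geometric mean `(a, b) ↦ a ^ α * b ^ (1 - α)` is jointly concave
and positively homogeneous. Since `h ^ α * g ^ (1 - α) = f`, this makes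
`φ = C_h ^ α * C_g ^ (1 - α)` a supersolution of the equation defining `C_f`:
`φ ≥ f + γ Σ_i p(·,i) φ(T(·,i))`. A bounded-below supersolution dominates the bounded
solution: a lower bound `m ≤ 0` of `φ - C_f` improves to `γ m`, and `γ ^ n m → 0`.
-/

def Bdd {X : Type*} (f : X → ℝ) : Prop := ∃ M, ∀ x, |f x| ≤ M

/-- `C` is a (bounded) discounted cumulative cost for the one-step cost `f`. -/
def IsDCC {X I : Type*} [Fintype I] (p : X → I → ℝ) (T : X → I → X) (γ : ℝ)
    (f C : X → ℝ) : Prop :=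
  Bdd C ∧ ∀ x, C x = f x + γ * ∑ i, p x i * C (T x i)

open Finset Filter

namespace Real

theorem mul_rpow_mul_mul_rpow_one_sub {a b c α : ℝ} (hc : 0 ≤ c) (ha : 0 ≤ a)
    (hb : 0 ≤ b) :
    (c * a) ^ α * (c * b) ^ (1 - α) = c * (a ^ α * b ^ (1 - α)) := by
  rw [mul_rpow hc ha, mul_rpow hc hb, mul_mul_mul_comm, ← rpow_add' hc (by simp),
    add_sub_cancel, rpow_one]

theorem sum_mul_rpow_mul_rpow_one_sub_le {ι : Type*} (s : Finset ι) {w a b : ι → ℝ}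
    (hw : ∀ i ∈ s, 0 ≤ w i) (ha : ∀ i ∈ s, 0 ≤ a i) (hb : ∀ i ∈ s, 0 ≤ b i)
    {α : ℝ} (hα0 : 0 < α) (hα1 : α < 1) :
    ∑ i ∈ s, w i * (a i ^ α * b i ^ (1 - α)) ≤
      (∑ i ∈ s, w i * a i) ^ α * (∑ i ∈ s, w i * b i) ^ (1 - α) := by
  have hwa : ∀ i ∈ s, 0 ≤ w i * a i := fun i hi => mul_nonneg (hw i hi) (ha i hi)
  have hwb : ∀ i ∈ s, 0 ≤ w i * b i := fun i hi => mul_nonneg (hw i hi) (hb i hi)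
  have holder := inner_le_Lp_mul_Lq_of_nonneg s (HolderConjugate.inv_one_sub_inv hα0 hα1)
    (fun i hi => rpow_nonneg (hwa i hi) α) (fun i hi => rpow_nonneg (hwb i hi) (1 - α))
  rwa [sum_congr rfl fun i hi => mul_rpow_mul_mul_rpow_one_sub (hw i hi) (ha i hi) (hb i hi),
    sum_congr rfl fun i hi => rpow_rpow_inv (hwa i hi) hα0.ne',
    sum_congr rfl fun i hi => rpow_rpow_inv (hwb i hi) (sub_pos.2 hα1).ne',
    one_div, inv_inv, one_div, inv_inv] at holder

theorem rpow_mul_rpow_one_sub_add_le {a b c d α : ℝ} (ha : 0 ≤ a) (hb : 0 ≤ b) (hc : 0 ≤ c)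
    (hd : 0 ≤ d) (hα0 : 0 < α) (hα1 : α < 1) :
    a ^ α * b ^ (1 - α) + c ^ α * d ^ (1 - α) ≤ (a + c) ^ α * (b + d) ^ (1 - α) := by
  simpa using sum_mul_rpow_mul_rpow_one_sub_le univ (w := fun _ => 1) (a := ![a, c])
    (b := ![b, d]) (by simp) (by simp [Fin.forall_fin_two, ha, hc])
    (by simp [Fin.forall_fin_two, hb, hd]) hα0 hα1

theorem rpow_one_div_mul_rpow_one_sub_one_div_rpow {f g α : ℝ} (hf : 0 ≤ f) (hg : 0 < g)
    (hα : α ≠ 0) : (f ^ (1 / α) * g ^ (1 - 1 / α)) ^ α * g ^ (1 - α) = f := by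
  rw [mul_rpow (rpow_nonneg hf _) (rpow_nonneg hg.le _), ← rpow_mul hf, ← rpow_mul hg.le,
    one_div_mul_cancel hα, rpow_one, mul_assoc, ← rpow_add hg,
    show (1 - 1 / α) * α + (1 - α) = 0 by field_simp; ring, rpow_zero, mul_one]

end Real

section Comparison

variable {X I : Type*} [Fintype I] {p : X → I → ℝ} {T : X → I → X} {γ : ℝ}

theorem mul_le_of_le_of_discounted_le (hp0 : ∀ x i, 0 ≤ p x i) (hp1 : ∀ x, ∑ i, p x i = 1)
    (hγ0 : 0 ≤ γ) {D : X → ℝ} {m : ℝ} (hm : ∀ x, m ≤ D x)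
    (hD : ∀ x, γ * ∑ i, p x i * D (T x i) ≤ D x) (x : X) : γ * m ≤ D x :=
  calc γ * m = γ * ∑ i, p x i * m := by rw [← sum_mul, hp1, one_mul]
    _ ≤ γ * ∑ i, p x i * D (T x i) := by
      gcongr with i
      exacts [hp0 x i, hm _]
    _ ≤ D x := hD x

theorem nonneg_of_discounted_le (hp0 : ∀ x i, 0 ≤ p x i) (hp1 : ∀ x, ∑ i, p x i = 1)
    (hγ0 : 0 ≤ γ) (hγ1 : γ < 1) {D : X → ℝ} {m : ℝ} (hm : ∀ x, m ≤ D x)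
    (hD : ∀ x, γ * ∑ i, p x i * D (T x i) ≤ D x) (x : X) : 0 ≤ D x := by
  have hpow : ∀ n : ℕ, ∀ x, γ ^ n * min m 0 ≤ D x := by
    intro n
    induction n with
    | zero => simpa using fun x => (min_le_left m 0).trans (hm x)
    | succ n ih =>
      simpa only [pow_succ', mul_assoc] using mul_le_of_le_of_discounted_le hp0 hp1 hγ0 ih hD
  have hlim : Tendsto (fun n : ℕ => γ ^ n * min m 0) atTop (nhds 0) := by
    simpa using (tendsto_pow_atTop_nhds_zero_of_lt_one hγ0 hγ1).mul_const (min m 0)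
  exact le_of_tendsto' hlim fun n => hpow n x

variable (hp0 : ∀ x i, 0 ≤ p x i) (hp1 : ∀ x, ∑ i, p x i = 1)
    (hγ0 : 0 ≤ γ) (hγ1 : γ < 1)
include hp0 hp1 hγ0 hγ1

theorem IsDCC.nonneg {f C : X → ℝ} (hC : IsDCC p T γ f C) (hf : ∀ x, 0 ≤ f x) (x : X) :
    0 ≤ C x := by
  obtain ⟨M, hM⟩ := hC.1
  refine nonneg_of_discounted_le (T := T) hp0 hp1 hγ0 hγ1 (fun x => (abs_le.mp (hM x)).1)
    (fun x => ?_) x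
  linarith [hC.2 x, hf x]

theorem IsDCC.le_of_supersolution {f C φ : X → ℝ} (hC : IsDCC p T γ f C) {m : ℝ}
    (hm : ∀ x, m ≤ φ x) (hφ : ∀ x, f x + γ * ∑ i, p x i * φ (T x i) ≤ φ x) (x : X) :
    C x ≤ φ x := by
  obtain ⟨M, hM⟩ := hC.1
  refine sub_nonneg.mp <| nonneg_of_discounted_le (T := T) hp0 hp1 hγ0 hγ1
    (D := fun x => φ x - C x) (m := m - M)
    (fun x => by linarith [hm x, (abs_le.mp (hM x)).2]) (fun x => ?_) x
  simp only [mul_sub, sum_sub_distrib]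
  linarith [hφ x, hC.2 x]

end Comparison

theorem discounted_cost_holder_general
    {X I : Type*} [Fintype I]
    (p : X → I → ℝ) (hp0 : ∀ x i, 0 ≤ p x i) (hp1 : ∀ x, ∑ i, p x i = 1)
    (T : X → I → X) (γ : ℝ) (hγ0 : 0 ≤ γ) (hγ1 : γ < 1)
    (α : ℝ) (hα0 : 0 < α) (hα1 : α < 1)
    (f g : X → ℝ)
    (hf0 : ∀ x, 0 ≤ f x)
    (ε : ℝ) (hε : 0 < ε) (hgε : ∀ x, ε ≤ g x)
    (Cf Ch Cg : X → ℝ)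
    (hCf : IsDCC p T γ f Cf)
    (hCh : IsDCC p T γ (fun x => f x ^ (1 / α) * g x ^ (1 - 1 / α)) Ch)
    (hCg : IsDCC p T γ g Cg) :
    ∀ x, Cf x ≤ Ch x ^ α * Cg x ^ (1 - α) := by
  have hg : ∀ x, 0 < g x := fun x => hε.trans_le (hgε x)
  have hh : ∀ x, 0 ≤ f x ^ (1 / α) * g x ^ (1 - 1 / α) := fun x =>
    mul_nonneg (Real.rpow_nonneg (hf0 x) _) (Real.rpow_nonneg (hg x).le _)
  have hCh0 := hCh.nonneg hp0 hp1 hγ0 hγ1 hh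
  have hCg0 := hCg.nonneg hp0 hp1 hγ0 hγ1 fun x => (hg x).le
  refine hCf.le_of_supersolution hp0 hp1 hγ0 hγ1 (m := 0)
    (fun x => mul_nonneg (Real.rpow_nonneg (hCh0 x) _) (Real.rpow_nonneg (hCg0 x) _)) fun x => ?_
  set A := ∑ i, p x i * Ch (T x i)
  set B := ∑ i, p x i * Cg (T x i)
  have hA : 0 ≤ A := sum_nonneg fun i _ => mul_nonneg (hp0 x i) (hCh0 _)
  have hB : 0 ≤ B := sum_nonneg fun i _ => mul_nonneg (hp0 x i) (hCg0 _)
  calc f x + γ * ∑ i, p x i * (Ch (T x i) ^ α * Cg (T x i) ^ (1 - α))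
      ≤ f x + γ * (A ^ α * B ^ (1 - α)) := by
        gcongr
        exact Real.sum_mul_rpow_mul_rpow_one_sub_le univ (fun i _ => hp0 x i)
          (fun i _ => hCh0 _) (fun i _ => hCg0 _) hα0 hα1
    _ = (f x ^ (1 / α) * g x ^ (1 - 1 / α)) ^ α * g x ^ (1 - α) +
          (γ * A) ^ α * (γ * B) ^ (1 - α) := by
        rw [Real.rpow_one_div_mul_rpow_one_sub_one_div_rpow (hf0 x) (hg x) hα0.ne',
          Real.mul_rpow_mul_mul_rpow_one_sub hγ0 hA hB]
    _ ≤ Ch x ^ α * Cg x ^ (1 - α) := by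
        rw [hCh.2 x, hCg.2 x]
        exact Real.rpow_mul_rpow_one_sub_add_le (hh x) (hg x).le (by positivity)
          (by positivity) hα0 hα1

/-- Hölder inequality for discounted cumulative costs: if `α ∈ (0,1)`,
`f ≥ 0`, `g ≥ ε > 0` are bounded and `h = f^{1/α} g^{1-1/α}`, then
`C_f(x) ≤ C_h(x)^α * C_g(x)^{1-α}` for every `x`. -/
theorem discounted_cost_holder
    {X I : Type*} [Fintype I]
    (p : X → I → ℝ) (hp0 : ∀ x i, 0 ≤ p x i) (hp1 : ∀ x, ∑ i, p x i = 1)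
    (T : X → I → X) (γ : ℝ) (hγ0 : 0 ≤ γ) (hγ1 : γ < 1)
    (α : ℝ) (hα0 : 0 < α) (hα1 : α < 1)
    (f g : X → ℝ) (hf : Bdd f) (hg : Bdd g)
    (hf0 : ∀ x, 0 ≤ f x)
    (ε : ℝ) (hε : 0 < ε) (hgε : ∀ x, ε ≤ g x)
    (Cf Ch Cg : X → ℝ)
    (hCf : IsDCC p T γ f Cf)
    (hCh : IsDCC p T γ (fun x => f x ^ (1 / α) * g x ^ (1 - 1 / α)) Ch)
    (hCg : IsDCC p T γ g Cg) :
    ∀ x, Cf x ≤ Ch x ^ α * Cg x ^ (1 - α) :=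
  discounted_cost_holder_general p hp0 hp1 T γ hγ0 hγ1 α hα0 hα1 f g hf0 ε hε hgε Cf Ch Cg hCf hCh
    hCg
end

section
/- Let γ ∈ (0,1), α ∈ (0,1), Ψ ≥ 0, and let (Δ_t)_{t∈ℕ} and (Θ_t)_{t∈ℕ} be sequences of nonnegative reals such that Δ_t ≤ Ψ^α Θ_t^{1−α} for every t and Σ_{t=0}^∞ γ^t Θ_t converges. Then Σ_{t=0}^∞ γ^t Δ_t converges and Σ_{t=0}^∞ γ^t Δ_t ≤ (Ψ/(1−γ))^α · (Σ_{t=0}^∞ γ^t Θ_t)^{1−α}. -/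
/-!
Write `γ^t Δ_t ≤ (Ψ γ^t)^α (γ^t Θ_t)^{1−α}` and apply Hölder's inequality with exponents
`1/α` and `1/(1−α)`: the first factor sums to the geometric series `Ψ/(1−γ)`, the second
to the total discounted information.
-/

namespace Real

theorem summable_and_tsum_rpow_mul_rpow_one_sub_le {ι : Type*} {f g : ι → ℝ} {α : ℝ}
    (hα0 : 0 < α) (hα1 : α < 1) (hf : ∀ i, 0 ≤ f i) (hg : ∀ i, 0 ≤ g i)
    (hf_sum : Summable f) (hg_sum : Summable g) :
    (Summable fun i => f i ^ α * g i ^ (1 - α)) ∧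
      ∑' i, f i ^ α * g i ^ (1 - α) ≤ (∑' i, f i) ^ α * (∑' i, g i) ^ (1 - α) := by
  have h1α : 0 < 1 - α := sub_pos.mpr hα1
  have hpq : (1 / α).HolderConjugate (1 / (1 - α)) :=
    holderConjugate_one_div hα0 h1α (by ring)
  have hroot : ∀ {x β : ℝ}, 0 ≤ x → 0 < β → (x ^ β) ^ (1 / β) = x := fun hx hβ => by
    rw [← rpow_mul hx, mul_one_div_cancel hβ.ne', rpow_one]
  have hf' : (fun i => (f i ^ α) ^ (1 / α)) = f := funext fun i => hroot (hf i) hα0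
  have hg' : (fun i => (g i ^ (1 - α)) ^ (1 / (1 - α))) = g := funext fun i => hroot (hg i) h1α
  have holder := summable_and_inner_le_Lp_mul_Lq_tsum_of_nonneg hpq
    (fun i => rpow_nonneg (hf i) α) (fun i => rpow_nonneg (hg i) (1 - α))
    (hf'.symm ▸ hf_sum) (hg'.symm ▸ hg_sum)
  rw [hf', hg', one_div_one_div, one_div_one_div] at holder
  exact holder

theorem mul_rpow_mul_rpow_one_sub {a b c α : ℝ} (ha : 0 ≤ a) (hb : 0 ≤ b) (hc : 0 ≤ c) :
    (a * c) ^ α * (c * b) ^ (1 - α) = c * (a ^ α * b ^ (1 - α)) := by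
  have hsplit : c ^ α * c ^ (1 - α) = c := by
    rw [← rpow_add' hc (by norm_num), add_sub_cancel, rpow_one]
  rw [mul_rpow ha hc, mul_rpow hc hb]
  linear_combination a ^ α * b ^ (1 - α) * hsplit

end Real

theorem discounted_regret_bound_sequence
    (γ α Ψ : ℝ) (hγ0 : 0 < γ) (hγ1 : γ < 1) (hα0 : 0 < α) (hα1 : α < 1)
    (hΨ : 0 ≤ Ψ)
    (Δ Θ : ℕ → ℝ) (hΔ0 : ∀ t, 0 ≤ Δ t) (hΘ0 : ∀ t, 0 ≤ Θ t)
    (hratio : ∀ t, Δ t ≤ Ψ ^ α * Θ t ^ (1 - α))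
    (hsum : Summable fun t => γ ^ t * Θ t) :
    (Summable fun t => γ ^ t * Δ t) ∧
      (∑' t, γ ^ t * Δ t) ≤ (Ψ / (1 - γ)) ^ α * (∑' t, γ ^ t * Θ t) ^ (1 - α) := by
  have hγt : ∀ t : ℕ, 0 ≤ γ ^ t := fun t => pow_nonneg hγ0.le t
  have hgeom : HasSum (fun t : ℕ => Ψ * γ ^ t) (Ψ / (1 - γ)) := by
    simpa [div_eq_mul_inv] using (hasSum_geometric_of_lt_one hγ0.le hγ1).mul_left Ψ
  obtain ⟨hholder_sum, hholder⟩ := Real.summable_and_tsum_rpow_mul_rpow_one_sub_le hα0 hα1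
    (fun t => mul_nonneg hΨ (hγt t)) (fun t => mul_nonneg (hγt t) (hΘ0 t))
    hgeom.summable hsum
  have hdom : ∀ t, γ ^ t * Δ t ≤ (Ψ * γ ^ t) ^ α * (γ ^ t * Θ t) ^ (1 - α) := fun t => by
    rw [Real.mul_rpow_mul_rpow_one_sub hΨ (hΘ0 t) (hγt t)]
    exact mul_le_mul_of_nonneg_left (hratio t) (hγt t)
  have hsumΔ : Summable fun t => γ ^ t * Δ t :=
    hholder_sum.of_nonneg_of_le (fun t => mul_nonneg (hγt t) (hΔ0 t)) hdom
  refine ⟨hsumΔ, ?_⟩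
  calc ∑' t, γ ^ t * Δ t ≤ ∑' t, (Ψ * γ ^ t) ^ α * (γ ^ t * Θ t) ^ (1 - α) :=
        hsumΔ.tsum_le_tsum hdom hholder_sum
    _ ≤ (Ψ / (1 - γ)) ^ α * (∑' t, γ ^ t * Θ t) ^ (1 - α) := hgeom.tsum_eq ▸ hholder
end

section
/- For θ ∈ (1/2,1) and γ ∈ (0,1), the quantity D = 1 − 4γ²θ(1−θ) satisfies 0 < D < 1, and both exponents ζ_± = ln((1 ± √D)/(2γθ)) / ln((1−θ)/θ) are well defined and solve the transcendental equation (1−θ)^ζ θ^{1−ζ} + θ^ζ (1−θ)^{1−ζ} = 1/γ. -/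
/-!
With `r = (1−θ)/θ`, the exponent `ζ = log u / log r` is `log_r u`, so `r^ζ = u` and the two terms
of the equation are `(1−θ)^ζ θ^{1−ζ} = θu` and `θ^ζ (1−θ)^{1−ζ} = (1−θ)/u`. The equation
`θu + (1−θ)/u = 1/γ` is the quadratic `γθu² − u + γ(1−θ) = 0`, whose discriminant is `D` and
whose roots are `(1 ± √D)/(2γθ)`.
-/

/-- The discriminant `D = 1 − 4γ²θ(1−θ)`. -/
noncomputable def Dq (θ γ : ℝ) : ℝ := 1 - 4 * γ ^ 2 * θ * (1 - θ)

/-- The exponent `ζ_+ = ln((1 + √D)/(2γθ)) / ln((1−θ)/θ)`. -/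
noncomputable def zetaPlus (θ γ : ℝ) : ℝ :=
  Real.log ((1 + Real.sqrt (Dq θ γ)) / (2 * γ * θ)) / Real.log ((1 - θ) / θ)

/-- The exponent `ζ_− = ln((1 − √D)/(2γθ)) / ln((1−θ)/θ)`. -/
noncomputable def zetaMinus (θ γ : ℝ) : ℝ :=
  Real.log ((1 - Real.sqrt (Dq θ γ)) / (2 * γ * θ)) / Real.log ((1 - θ) / θ)

open Real

lemma rpow_mul_rpow_one_sub {a b : ℝ} (ha : 0 < a) (hb : 0 < b) (ζ : ℝ) :
    a ^ ζ * b ^ (1 - ζ) = b * (a / b) ^ ζ := by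
  have hbζ : b ^ ζ ≠ 0 := (rpow_pos_of_pos hb ζ).ne'
  rw [rpow_sub hb, rpow_one, div_rpow ha.le hb.le]
  field_simp

lemma rpow_add_rpow_eq_inv_of_quadratic {a b γ u ζ : ℝ} (ha : 0 < a) (hb : 0 < b) (hγ : γ ≠ 0)
    (hq : γ * b * (u * u) + -1 * u + γ * a = 0) (hζ : (a / b) ^ ζ = u) :
    a ^ ζ * b ^ (1 - ζ) + b ^ ζ * a ^ (1 - ζ) = 1 / γ := by
  have hu : u ≠ 0 := hζ ▸ (rpow_pos_of_pos (div_pos ha hb) ζ).ne'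
  have hba : (b / a) ^ ζ = u⁻¹ := by rw [← inv_div, inv_rpow (div_pos ha hb).le, hζ]
  rw [rpow_mul_rpow_one_sub ha hb, rpow_mul_rpow_one_sub hb ha, hζ, hba]
  field_simp
  linear_combination hq

lemma Dq_eq_discrim (θ γ : ℝ) : Dq θ γ = discrim (γ * θ) (-1) (γ * (1 - θ)) := by
  unfold Dq discrim
  ring

lemma Dq_pos {θ γ : ℝ} (hγ : γ ^ 2 < 1) : 0 < Dq θ γ := by
  have h : Dq θ γ = 1 - γ ^ 2 + γ ^ 2 * (2 * θ - 1) ^ 2 := by unfold Dq; ring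
  rw [h]
  nlinarith [sq_nonneg (γ * (2 * θ - 1))]

lemma Dq_lt_one {θ γ : ℝ} (hθ : θ ∈ Set.Ioo (0 : ℝ) 1) (hγ : γ ≠ 0) : Dq θ γ < 1 := by
  have : 0 < γ ^ 2 * (θ * (1 - θ)) := mul_pos (by positivity) (by nlinarith [hθ.1, hθ.2])
  unfold Dq
  linarith

lemma quadratic_eq_zero_of_eq_root {θ γ x : ℝ} (hθ : θ ≠ 0) (hγ : γ ≠ 0) (hD : 0 ≤ Dq θ γ)
    (hx : x = (1 + √(Dq θ γ)) / (2 * γ * θ) ∨ x = (1 - √(Dq θ γ)) / (2 * γ * θ)) :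
    γ * θ * (x * x) + -1 * x + γ * (1 - θ) = 0 := by
  have hdisc : discrim (γ * θ) (-1) (γ * (1 - θ)) = √(Dq θ γ) * √(Dq θ γ) := by
    rw [← Dq_eq_discrim, mul_self_sqrt hD]
  rw [quadratic_eq_zero_iff (mul_ne_zero hγ hθ) hdisc]
  simpa only [neg_neg, mul_assoc] using hx

theorem zeta_exponents_solve_equation
    (θ γ : ℝ) (hθ : θ ∈ Set.Ioo (1 / 2 : ℝ) 1) (hγ : γ ∈ Set.Ioo (0 : ℝ) 1) :
    0 < Dq θ γ ∧ Dq θ γ < 1 ∧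
    0 < (1 + Real.sqrt (Dq θ γ)) / (2 * γ * θ) ∧
    0 < (1 - Real.sqrt (Dq θ γ)) / (2 * γ * θ) ∧
    Real.log ((1 - θ) / θ) ≠ 0 ∧
    (∀ ζ : ℝ, ζ = zetaPlus θ γ ∨ ζ = zetaMinus θ γ →
      (1 - θ) ^ ζ * θ ^ (1 - ζ) + θ ^ ζ * (1 - θ) ^ (1 - ζ) = 1 / γ) := by
  obtain ⟨hθ₁, hθ₂⟩ := hθ
  obtain ⟨hγ₀, hγ₁⟩ := hγ
  have hθ₀ : 0 < θ := by linarith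
  have hD₀ : 0 < Dq θ γ := Dq_pos (by nlinarith)
  have hD₁ : Dq θ γ < 1 := Dq_lt_one ⟨hθ₀, hθ₂⟩ hγ₀.ne'
  have hsqrt : √(Dq θ γ) < 1 := (sqrt_lt' one_pos).mpr (by simpa using hD₁)
  have hden : 0 < 2 * γ * θ := by positivity
  have hr₀ : 0 < (1 - θ) / θ := div_pos (by linarith) hθ₀
  have hr₁ : (1 - θ) / θ < 1 := (div_lt_one hθ₀).mpr (by linarith)
  refine ⟨hD₀, hD₁, div_pos (by positivity) hden, div_pos (by linarith) hden,
    (log_neg hr₀ hr₁).ne, ?_⟩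
  intro ζ hζ
  obtain ⟨u, hu, hroot, rfl⟩ : ∃ u, 0 < u ∧
      (u = (1 + √(Dq θ γ)) / (2 * γ * θ) ∨ u = (1 - √(Dq θ γ)) / (2 * γ * θ)) ∧
      ζ = logb ((1 - θ) / θ) u := by
    rcases hζ with rfl | rfl
    exacts [⟨_, div_pos (by positivity) hden, .inl rfl, rfl⟩,
      ⟨_, div_pos (by linarith) hden, .inr rfl, rfl⟩]
  exact rpow_add_rpow_eq_inv_of_quadratic (by linarith) hθ₀ hγ₀.ne'
    (quadratic_eq_zero_of_eq_root hθ₀.ne' hγ₀.ne' hD₀.le hroot) (rpow_logb hr₀ hr₁.ne hu)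
end
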